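/- arXiv:1809.03961 — 2 statements merged into one kernel-verified Lean document; each statement's English description precedes it below -/
import Mathlib

section
/- The dimensionless product satisfies r_S ε₂ < λ₁, where r_S = s₁⁰/s₂_max, ε₂ = t_{c₁}/t_{s₁}, λ₁ = t_{c₁}/t_{s₂}; explicitly, (s₁⁰/s₂_max)·(V₁/(k₁(K_{M₁}+s₁⁰)²)) < k₃e₂⁰/(k₁(K_{M₁}+s₁⁰)) under the stated definitions, assuming V₂ > k₂c₁_max. -/
/-! With `c = c₁_max` and `K = K_{M₁} + s₁⁰`, the identity `c K = e₁⁰ s₁⁰` collapses the product to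
`r_S ε₂ = (V₂ - k₂ c) / (K_{M₂} k₁ K)`, while `λ₁ = k₃ e₂⁰ / (k₁ K)`. Since `K_{M₂} k₃ e₂⁰ = V₂ + k₋₃ e₂⁰`,
the claim reduces to `-k₂ c < k₋₃ e₂⁰`. -/

theorem div_sMax_mul_eq {s e k1 k2 K KM c V : ℝ} (hK : K ≠ 0) (hc : c ≠ 0) (hk2 : k2 ≠ 0)
    (hcK : c * K = e * s) :
    s / (KM * (k2 * c) / (V - k2 * c)) * (k2 * e / (k1 * K ^ 2)) =
      (V - k2 * c) / (KM * (k1 * K)) := by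
  rw [div_div_eq_mul_div, div_mul_div_comm]
  calc s * (V - k2 * c) * (k2 * e) / (KM * (k2 * c) * (k1 * K ^ 2))
      = (V - k2 * c) * (k2 * (c * K)) / (KM * (k2 * c) * (k1 * K ^ 2)) := by rw [hcK]; ring
    _ = (V - k2 * c) / (KM * (k1 * K)) := by field_simp

theorem div_mul_lt_div {x y b a : ℝ} (hb : 0 < b) (ha : 0 < a) (h : x < b * y) :
    x / (b * a) < y / a := by
  rw [← div_div]
  exact div_lt_div_of_pos_right ((div_lt_iff₀' hb).2 h) ha

theorem one_div_mul_div_div {a K V : ℝ} (hK : K ≠ 0) :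
    1 / (a * K) / (K / V) = V / (a * K ^ 2) := by
  field_simp

theorem stmt_11_general (k1 k2 km1 k3 km3 k4 e10 e20 s10 : ℝ)
    (hk1 : 0 < k1) (hk2 : 0 < k2) (hkm1 : 0 < km1) (hk3 : 0 < k3)
    (hkm3 : 0 < km3) (hk4 : 0 < k4) (he10 : 0 < e10) (he20 : 0 < e20)
    (hs10 : 0 < s10)
    (KM1 KM2 V1 V2 c1max s2max tc1 ts1 ts2 rS ε2 lam1 : ℝ)
    (hKM1 : KM1 = (km1 + k2) / k1)
    (hKM2 : KM2 = (km3 + k4) / k3)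
    (hV1 : V1 = k2 * e10)
    (hV2 : V2 = k4 * e20)
    (hc1max : c1max = e10 * s10 / (KM1 + s10))
    (hs2max : s2max = KM2 * (k2 * c1max) / (V2 - k2 * c1max))
    (htc1 : tc1 = 1 / (k1 * (KM1 + s10)))
    (hts1 : ts1 = (KM1 + s10) / V1)
    (hts2 : ts2 = 1 / (k3 * e20))
    (hrS : rS = s10 / s2max)
    (hε2 : ε2 = tc1 / ts1)
    (hlam1 : lam1 = tc1 / ts2) :
    rS * ε2 < lam1 ∧
      (s10 / s2max) * (V1 / (k1 * (KM1 + s10) ^ 2)) <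
        k3 * e20 / (k1 * (KM1 + s10)) := by
  have hK : 0 < KM1 + s10 := by rw [hKM1]; positivity
  have hc : 0 < c1max := by rw [hc1max]; positivity
  have hcK : c1max * (KM1 + s10) = e10 * s10 := by rw [hc1max]; field_simp
  have hKM2k3 : KM2 * k3 = km3 + k4 := by rw [hKM2]; field_simp
  have hV2lt : V2 - k2 * c1max < KM2 * (k3 * e20) := by
    rw [← mul_assoc, hKM2k3, hV2]; nlinarith [mul_pos hk2 hc, mul_pos hkm3 he20]
  have key : (s10 / s2max) * (V1 / (k1 * (KM1 + s10) ^ 2)) < k3 * e20 / (k1 * (KM1 + s10)) := by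
    rw [hs2max, hV1, div_sMax_mul_eq hK.ne' hc.ne' hk2.ne' hcK]
    exact div_mul_lt_div (by rw [hKM2]; positivity) (by positivity) hV2lt
  refine ⟨?_, key⟩
  rwa [hrS, hε2, hlam1, htc1, hts1, hts2, one_div_mul_div_div hK.ne',
    div_div_div_cancel_left' _ _ one_ne_zero]

/-- The dimensionless product satisfies r_S ε₂ < λ₁ under the stated
definitions, assuming V₂ > k₂ c₁_max. -/
theorem stmt_11 (k1 k2 km1 k3 km3 k4 e10 e20 s10 : ℝ)
    (hk1 : 0 < k1) (hk2 : 0 < k2) (hkm1 : 0 < km1) (hk3 : 0 < k3)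
    (hkm3 : 0 < km3) (hk4 : 0 < k4) (he10 : 0 < e10) (he20 : 0 < e20)
    (hs10 : 0 < s10)
    (KM1 KM2 V1 V2 c1max s2max tc1 ts1 ts2 rS ε2 lam1 : ℝ)
    (hKM1 : KM1 = (km1 + k2) / k1)
    (hKM2 : KM2 = (km3 + k4) / k3)
    (hV1 : V1 = k2 * e10)
    (hV2 : V2 = k4 * e20)
    (hc1max : c1max = e10 * s10 / (KM1 + s10))
    (hV2big : k2 * c1max < V2)
    (hs2max : s2max = KM2 * (k2 * c1max) / (V2 - k2 * c1max))
    (htc1 : tc1 = 1 / (k1 * (KM1 + s10)))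
    (hts1 : ts1 = (KM1 + s10) / V1)
    (hts2 : ts2 = 1 / (k3 * e20))
    (hrS : rS = s10 / s2max)
    (hε2 : ε2 = tc1 / ts1)
    (hlam1 : lam1 = tc1 / ts2) :
    rS * ε2 < lam1 ∧
      (s10 / s2max) * (V1 / (k1 * (KM1 + s10) ^ 2)) <
        k3 * e20 / (k1 * (KM1 + s10)) :=
  stmt_11_general k1 k2 km1 k3 km3 k4 e10 e20 s10 hk1 hk2 hkm1 hk3 hkm3 hk4 he10 he20 hs10 KM1 KM2
    V1 V2 c1max s2max tc1 ts1 ts2 rS ε2 lam1 hKM1 hKM2 hV1 hV2 hc1max hs2max htc1 hts1 hts2 hrS hε2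
    hlam1
end

section
/- The function x(t) = s₂_max (1 + ψ W(-ψ⁻¹ exp(-ψ⁻¹ - Θ t))), with ψ = V₂/(k₂c₁_max) > 1, Θ = (V₂ - k₂c₁_max)²/(V₂ K_{M₂}), and W the principal Lambert-W branch, solves the ODE x' = -V₂ x/(K_{M₂}+x) + k₂c₁_max with x(0) = 0. -/
/-!
On `[-1, ∞)` the map `w ↦ w eʷ` is strictly increasing, so any `W ≥ -1` solving `W(u) e^{W(u)} = u`
is its inverse on `(-1/e, 0)`. Being monotone with an open interval as image, `W` is
continuous, and the inverse function theorem gives `W' = 1 / ((1 + W) e^W)`. Hence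
`y(t) = W(c e^{b - Θt})` solves `y' = -Θ y / (1 + y)`, which is the Michaelis–Menten equation
under the substitution `x = s₂_max (1 + ψ y)`. At `t = 0` the argument is `(-ψ⁻¹) e^{-ψ⁻¹}`,
so `y(0) = -ψ⁻¹` and `x(0) = 0`.
-/

open Real Set Filter

lemma hasDerivAt_mul_exp (w : ℝ) :
    HasDerivAt (fun v : ℝ => v * exp v) ((1 + w) * exp w) w := by
  refine ((hasDerivAt_id w).mul (hasDerivAt_exp w)).congr_deriv ?_
  simp only [id, add_mul, one_mul]

lemma strictMonoOn_mul_exp : StrictMonoOn (fun w : ℝ => w * exp w) (Ici (-1)) := by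
  refine strictMonoOn_of_deriv_pos (convex_Ici _) (by fun_prop) fun w hw => ?_
  rw [interior_Ici, mem_Ioi] at hw
  rw [(hasDerivAt_mul_exp w).deriv]
  have := exp_pos w
  nlinarith

lemma mul_exp_mem_Ioo {w : ℝ} (hw : w ∈ Ioo (-1) 0) : w * exp w ∈ Ioo (-exp (-1)) 0 := by
  refine ⟨?_, mul_neg_of_neg_of_pos hw.2 (exp_pos w)⟩
  simpa using strictMonoOn_mul_exp (show (-1 : ℝ) ∈ Ici (-1) from self_mem_Ici)
    (show w ∈ Ici (-1) from hw.1.le) hw.1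

lemma neg_mul_exp_sub_mem_Ioo {a s : ℝ} (ha0 : 0 < a) (ha1 : a < 1) (hs : 0 ≤ s) :
    -a * exp (-a - s) ∈ Ioo (-exp (-1)) 0 := by
  obtain ⟨hlow, hneg⟩ := mul_exp_mem_Ioo (w := -a) ⟨by linarith, by linarith⟩
  have hs1 : exp (-s) ≤ 1 := exp_le_one_iff.mpr (by linarith)
  have hs0 := exp_pos (-s)
  rw [sub_eq_add_neg, exp_add, ← mul_assoc]
  exact ⟨by nlinarith, mul_neg_of_neg_of_pos hneg hs0⟩

section LambertW

variable {W : ℝ → ℝ}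
  (hW : ∀ u : ℝ, -exp (-1) < u → u ≤ 0 → -1 ≤ W u ∧ W u * exp (W u) = u)
include hW

lemma lambertW_mul_exp {w : ℝ} (hw : w ∈ Ioo (-1) 0) : W (w * exp w) = w := by
  obtain ⟨hlow, hneg⟩ := mul_exp_mem_Ioo hw
  obtain ⟨hW1, hWeq⟩ := hW _ hlow hneg.le
  exact strictMonoOn_mul_exp.injOn hW1 (show w ∈ Ici (-1) from hw.1.le) hWeq

lemma lambertW_mem_Ioo {u : ℝ} (hu : u ∈ Ioo (-exp (-1)) 0) : W u ∈ Ioo (-1) 0 := by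
  obtain ⟨hW1, hWeq⟩ := hW u hu.1 hu.2.le
  refine ⟨lt_of_le_of_ne hW1 fun h => ?_, ?_⟩
  · rw [← h] at hWeq
    linarith [hu.1, show (-1 : ℝ) * exp (-1) = -exp (-1) by ring]
  · by_contra! h
    linarith [hu.2, mul_nonneg h (exp_pos (W u)).le]

lemma monotoneOn_lambertW : MonotoneOn W (Ioo (-exp (-1)) 0) := by
  intro u hu v hv huv
  by_contra! h
  have := strictMonoOn_mul_exp (show W v ∈ Ici (-1) from (lambertW_mem_Ioo hW hv).1.le)
    (show W u ∈ Ici (-1) from (lambertW_mem_Ioo hW hu).1.le) h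
  simp only [(hW u hu.1 hu.2.le).2, (hW v hv.1 hv.2.le).2] at this
  linarith

lemma continuousAt_lambertW {u : ℝ} (hu : u ∈ Ioo (-exp (-1)) 0) : ContinuousAt W u := by
  have hWu := lambertW_mem_Ioo hW hu
  have himage : Ioo (-1) 0 ⊆ W '' Ioo (-exp (-1)) 0 := fun w hw =>
    ⟨w * exp w, mul_exp_mem_Ioo hw, lambertW_mul_exp hW hw⟩
  exact continuousAt_of_monotoneOn_of_image_mem_nhds (monotoneOn_lambertW hW)
    (Ioo_mem_nhds hu.1 hu.2) (mem_of_superset (Ioo_mem_nhds hWu.1 hWu.2) himage)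

lemma hasDerivAt_lambertW {u : ℝ} (hu : u ∈ Ioo (-exp (-1)) 0) :
    HasDerivAt W ((1 + W u) * exp (W u))⁻¹ u := by
  have hpos : 0 < (1 + W u) * exp (W u) :=
    mul_pos (by linarith [(lambertW_mem_Ioo hW hu).1]) (exp_pos _)
  refine HasDerivAt.of_local_left_inverse (continuousAt_lambertW hW hu)
    (hasDerivAt_mul_exp (W u)) hpos.ne' ?_
  filter_upwards [Ioo_mem_nhds hu.1 hu.2] with v hv using (hW v hv.1 hv.2.le).2

lemma hasDerivAt_lambertW_mul_exp {c b Θ t : ℝ}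
    (hu : c * exp (b - Θ * t) ∈ Ioo (-exp (-1)) 0) :
    HasDerivAt (fun s => W (c * exp (b - Θ * s)))
      (-Θ * W (c * exp (b - Θ * t)) / (1 + W (c * exp (b - Θ * t)))) t := by
  set y := W (c * exp (b - Θ * t))
  have hinner : HasDerivAt (fun s => c * exp (b - Θ * s)) (-Θ * (c * exp (b - Θ * t))) t := by
    refine ((((hasDerivAt_id t).const_mul Θ).const_sub b).exp.const_mul c).congr_deriv ?_
    simp only [id, mul_one]
    ring
  refine ((hasDerivAt_lambertW hW hu).comp t hinner).congr_deriv ?_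
  have h1y : 1 + y ≠ 0 := by linarith [(lambertW_mem_Ioo hW hu).1]
  have key : ((1 + y) * exp y)⁻¹ * (-Θ * (y * exp y)) = -Θ * y / (1 + y) := by
    field_simp [(exp_pos y).ne']
  rw [(hW _ hu.1 hu.2.le).2] at key
  exact key

end LambertW

lemma michaelisMenten_rate_eq {V K κ s ψ Θ y : ℝ} (hK : 0 < K) (hκ : 0 < κ) (hκV : κ < V)
    (hs : s = K * κ / (V - κ)) (hψ : ψ = V / κ) (hΘ : Θ = (V - κ) ^ 2 / (V * K))
    (hy : 0 < 1 + y) :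
    s * (ψ * (-Θ * y / (1 + y))) = -V * (s * (1 + ψ * y)) / (K + s * (1 + ψ * y)) + κ := by
  have hV : 0 < V := by linarith
  have hVκ : 0 < V - κ := by linarith
  have hden : K + s * (1 + ψ * y) = K * V / (V - κ) * (1 + y) := by
    rw [hs, hψ]
    field_simp
    ring
  rw [hden, hs, hψ, hΘ]
  field_simp
  ring

theorem stmt_14_general (V2 KM2 k2 c1max : ℝ)
    (hKM2 : 0 < KM2) (hk2 : 0 < k2) (hc1max : 0 < c1max)
    (hlt : k2 * c1max < V2)
    (s2max ψ Θ : ℝ)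
    (hs2max : s2max = KM2 * (k2 * c1max) / (V2 - k2 * c1max))
    (hψ : ψ = V2 / (k2 * c1max))
    (hΘ : Θ = (V2 - k2 * c1max) ^ 2 / (V2 * KM2))
    (W : ℝ → ℝ)
    (hW : ∀ u : ℝ, -Real.exp (-1) < u → u ≤ 0 →
      -1 ≤ W u ∧ W u * Real.exp (W u) = u)
    (x : ℝ → ℝ)
    (hx : ∀ t, x t = s2max * (1 + ψ * W (-ψ⁻¹ * Real.exp (-ψ⁻¹ - Θ * t)))) :
    x 0 = 0 ∧
      ∀ t : ℝ, 0 ≤ t →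
        HasDerivAt x (-V2 * x t / (KM2 + x t) + k2 * c1max) t := by
  have hκ : 0 < k2 * c1max := mul_pos hk2 hc1max
  have hψ1 : 1 < ψ := by rw [hψ, lt_div_iff₀ hκ]; linarith
  have hψ0 : 0 < ψ := by linarith
  have hΘ0 : 0 ≤ Θ := by rw [hΘ]; have : 0 < V2 := (by linarith); positivity
  have hmem (t : ℝ) (ht : 0 ≤ t) : -ψ⁻¹ * exp (-ψ⁻¹ - Θ * t) ∈ Ioo (-exp (-1)) 0 :=
    neg_mul_exp_sub_mem_Ioo (inv_pos.2 hψ0) (inv_lt_one_of_one_lt₀ hψ1) (mul_nonneg hΘ0 ht)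
  refine ⟨?_, fun t ht => ?_⟩
  · have hW0 : W (-ψ⁻¹ * exp (-ψ⁻¹ - Θ * 0)) = -ψ⁻¹ := by
      simpa using lambertW_mul_exp hW (w := -ψ⁻¹)
        ⟨by linarith [inv_lt_one_of_one_lt₀ hψ1], by linarith [inv_pos.2 hψ0]⟩
    rw [hx, hW0, mul_neg, mul_inv_cancel₀ hψ0.ne']
    ring
  · rw [hx t, show x = _ from funext hx]
    refine (((hasDerivAt_lambertW_mul_exp hW (hmem t ht)).const_mul ψ).const_add 1
      |>.const_mul s2max).congr_deriv ?_
    exact michaelisMenten_rate_eq hKM2 hκ hlt hs2max hψ hΘ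
      (by linarith [(lambertW_mem_Ioo hW (hmem t ht)).1])

/-- The function x(t) = s₂_max(1 + ψ W(-ψ⁻¹ exp(-ψ⁻¹ - Θt))) with
ψ = V₂/(k₂c₁_max) > 1, Θ = (V₂-k₂c₁_max)²/(V₂K_{M₂}) and W the principal
Lambert-W branch solves x' = -V₂x/(K_{M₂}+x) + k₂c₁_max, x(0) = 0. -/
theorem stmt_14 (V2 KM2 k2 c1max : ℝ)
    (hV2 : 0 < V2) (hKM2 : 0 < KM2) (hk2 : 0 < k2) (hc1max : 0 < c1max)
    (hlt : k2 * c1max < V2)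
    (s2max ψ Θ : ℝ)
    (hs2max : s2max = KM2 * (k2 * c1max) / (V2 - k2 * c1max))
    (hψ : ψ = V2 / (k2 * c1max))
    (hΘ : Θ = (V2 - k2 * c1max) ^ 2 / (V2 * KM2))
    (W : ℝ → ℝ)
    (hW : ∀ u : ℝ, -Real.exp (-1) < u → u ≤ 0 →
      -1 ≤ W u ∧ W u * Real.exp (W u) = u)
    (x : ℝ → ℝ)
    (hx : ∀ t, x t = s2max * (1 + ψ * W (-ψ⁻¹ * Real.exp (-ψ⁻¹ - Θ * t)))) :
    x 0 = 0 ∧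
      ∀ t : ℝ, 0 ≤ t →
        HasDerivAt x (-V2 * x t / (KM2 + x t) + k2 * c1max) t :=
  stmt_14_general V2 KM2 k2 c1max hKM2 hk2 hc1max hlt s2max ψ Θ hs2max hψ hΘ W hW x hx
end
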